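/- Under the hypotheses giving summability of successive differences (g : [0,∞) → [0,∞) continuous, concave, increasing; f ≥ 0 differentiable with L(f)-Lipschitz gradient; F(X) = Σ_{i=1}^m g(σ_i(X)) + f(X); μ > L(f); each L^{k+1} a global minimizer of the linearized proximal surrogate with supergradient weights), the successive differences converge to zero: ‖L^k − L^{k+1}‖_F → 0 as k → ∞. -/

import Mathlib

attribute [local instance] Matrix.frobeniusSeminormedAddCommGroup
  Matrix.frobeniusNormedAddCommGroup Matrix.frobeniusNormedSpace

/-- Squared Frobenius norm of a real matrix. -/
noncomputable def frobNormSq {m n : ℕ} (A : Matrix (Fin m) (Fin n) ℝ) : ℝ :=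
  ∑ i, ∑ j, (A i j) ^ 2

/-- Frobenius norm of a real matrix. -/
noncomputable def frobNorm {m n : ℕ} (A : Matrix (Fin m) (Fin n) ℝ) : ℝ :=
  Real.sqrt (frobNormSq A)

/-- The Frobenius inner product `⟨A, B⟩ = Σᵢⱼ Aᵢⱼ·Bᵢⱼ`. -/
noncomputable def frobInner {m n : ℕ} (A B : Matrix (Fin m) (Fin n) ℝ) : ℝ :=
  ∑ i, ∑ j, A i j * B i j

/-- The Frobenius inner product with a fixed matrix `G`, as a continuous linear map. -/
noncomputable def frobInnerCLM {m n : ℕ} (G : Matrix (Fin m) (Fin n) ℝ) :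
    Matrix (Fin m) (Fin n) ℝ →L[ℝ] ℝ :=
  LinearMap.toContinuousLinearMap
    { toFun := fun H => frobInner G H
      map_add' := by
        intro A B
        simp [frobInner, Matrix.add_apply, mul_add, Finset.sum_add_distrib]
      map_smul' := by
        intro c A
        simp [frobInner, Matrix.smul_apply, Finset.mul_sum, mul_comm, mul_left_comm,
          smul_eq_mul] }

/-- The singular values of a real `m × n` matrix `A`, arranged in nonincreasing order:
the square roots of the eigenvalues of `A * Aᵀ`, sorted in nonincreasing order. -/
noncomputable def singularValues {m n : ℕ} (A : Matrix (Fin m) (Fin n) ℝ) :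
    Fin (min m n) → ℝ := fun i =>
  Real.sqrt
    ((Matrix.isHermitian_mul_conjTranspose_self A).eigenvalues
      (Tuple.sort (fun j => -(Matrix.isHermitian_mul_conjTranspose_self A).eigenvalues j)
        (Fin.castLE (min_le_left m n) i)))

/-!
Each prox-linear step decreases `F` by at least `(μ - L_f)/2 · ‖L^{k+1} - L^k‖²`: the
supergradient inequalities majorize `∑ g(σᵢ)` by the weighted sum `∑ wᵢ σᵢ`, minimality of
`L^{k+1}` (tested against `X = L^k`) bounds the change of the linearized surrogate, and the descent
lemma for the `L_f`-smooth `f` pays for the linearization error. As `F ≥ 0`, the decreases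
telescope, so the squared differences are summable and tend to zero.
-/

open Finset

section Frobenius

variable {m n : ℕ}

lemma frobNormSq_eq_norm_sq (A : Matrix (Fin m) (Fin n) ℝ) : frobNormSq A = ‖A‖ ^ 2 := by
  rw [Matrix.frobenius_norm_def, ← Real.sqrt_eq_rpow, Real.sq_sqrt (by positivity)]
  simp [frobNormSq]

lemma frobNorm_eq_norm (A : Matrix (Fin m) (Fin n) ℝ) : frobNorm A = ‖A‖ := by
  rw [frobNorm, frobNormSq_eq_norm_sq, Real.sqrt_sq (norm_nonneg A)]

lemma frobInner_le (A B : Matrix (Fin m) (Fin n) ℝ) :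
    frobInner A B ≤ frobNorm A * frobNorm B := by
  simpa [frobInner, frobNorm, frobNormSq, Fintype.sum_prod_type] using
    Real.sum_mul_le_sqrt_mul_sqrt univ (fun p : Fin m × Fin n => A p.1 p.2) (fun p => B p.1 p.2)

lemma frobInner_sub_frobInner_le {G H : Matrix (Fin m) (Fin n) ℝ} {c : ℝ}
    (hGH : frobNorm (G - H) ≤ c) (V : Matrix (Fin m) (Fin n) ℝ) :
    frobInner G V - frobInner H V ≤ c * ‖V‖ :=
  calc frobInner G V - frobInner H V = frobInner (G - H) V := by
        simp only [frobInner, Matrix.sub_apply, sub_mul, sum_sub_distrib]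
    _ ≤ frobNorm (G - H) * ‖V‖ := frobNorm_eq_norm V ▸ frobInner_le _ _
    _ ≤ c * ‖V‖ := mul_le_mul_of_nonneg_right hGH (norm_nonneg V)

lemma singularValues_nonneg (A : Matrix (Fin m) (Fin n) ℝ) (i : Fin (min m n)) :
    0 ≤ singularValues A i :=
  Real.sqrt_nonneg _

end Frobenius

-- The Lipschitz condition on `f'` is stated pointwise because, with the Frobenius norm only a
-- local instance, instance search finds no operator norm on `Matrix _ _ ℝ →L[ℝ] ℝ`.
theorem le_add_fderiv_add_of_lipschitz_fderiv {E : Type*} [NormedAddCommGroup E]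
    [NormedSpace ℝ E] {f : E → ℝ} {f' : E → E →L[ℝ] ℝ} {K : ℝ}
    (hf : ∀ x, HasFDerivAt f (f' x) x) (hf' : ∀ x y v, f' x v - f' y v ≤ K * ‖x - y‖ * ‖v‖)
    (x y : E) :
    f y ≤ f x + f' x (y - x) + K / 2 * ‖y - x‖ ^ 2 := by
  set d := y - x
  set φ : ℝ → ℝ := fun t => f (x + t • d) - f x - t * f' x d
  set B : ℝ → ℝ := fun t => K / 2 * ‖d‖ ^ 2 * t ^ 2
  have hφ : ∀ t, HasDerivAt φ (f' (x + t • d) d - f' x d) t := fun t => by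
    have hline : HasDerivAt (fun t : ℝ => x + t • d) d t := by
      simpa using ((hasDerivAt_id t).smul_const d).const_add x
    simpa using (((hf _).comp_hasDerivAt t hline).sub_const (f x)).fun_sub
      ((hasDerivAt_id t).mul_const (f' x d))
  have hB : ∀ t, HasDerivAt B (K * ‖d‖ ^ 2 * t) t := fun t =>
    ((hasDerivAt_pow 2 t).const_mul (K / 2 * ‖d‖ ^ 2)).congr_deriv (by norm_num; ring)
  have hφ'_le : ∀ t ∈ Set.Ico (0 : ℝ) 1, f' (x + t • d) d - f' x d ≤ K * ‖d‖ ^ 2 * t := by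
    rintro t ⟨ht, -⟩
    calc f' (x + t • d) d - f' x d ≤ K * ‖x + t • d - x‖ * ‖d‖ := hf' _ _ _
      _ = K * ‖d‖ ^ 2 * t := by
        rw [add_sub_cancel_left, norm_smul, Real.norm_of_nonneg ht]; ring
  have hφ_le_B := image_le_of_deriv_right_le_deriv_boundary
    (fun t _ => (hφ t).continuousAt.continuousWithinAt) (fun t _ => (hφ t).hasDerivWithinAt)
    (by simp [φ, B]) (fun t _ => (hB t).continuousAt.continuousWithinAt)
    (fun t _ => (hB t).hasDerivWithinAt) hφ'_le (Set.right_mem_Icc.2 zero_le_one)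
  simp only [φ, B, d, one_smul, add_sub_cancel, one_pow, mul_one] at hφ_le_B
  linarith

theorem prox_linear_step_sufficient_decrease {E : Type*} [NormedAddCommGroup E]
    [NormedSpace ℝ E] {f h q : E → ℝ} {f' : E → E →L[ℝ] ℝ} {K μ : ℝ}
    (hf : ∀ x, HasFDerivAt f (f' x) x) (hf' : ∀ x y v, f' x v - f' y v ≤ K * ‖x - y‖ * ‖v‖)
    {x y : E} (hmajor : h y - h x ≤ q y - q x)
    (hmin : q y + f' x (y - x) + μ / 2 * ‖y - x‖ ^ 2 ≤ q x) :
    h y + f y + (μ - K) / 2 * ‖y - x‖ ^ 2 ≤ h x + f x := by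
  linarith [le_add_fderiv_add_of_lipschitz_fderiv hf hf' x y]

lemma sum_sub_sum_le_of_supergradient {ι : Type*} [Fintype ι] {g : ℝ → ℝ} {w a b : ι → ℝ}
    (hw : ∀ i, g (b i) ≤ g (a i) + w i * (b i - a i)) :
    ∑ i, g (b i) - ∑ i, g (a i) ≤ ∑ i, w i * b i - ∑ i, w i * a i := by
  rw [← sum_sub_distrib, ← sum_sub_distrib]
  exact sum_le_sum fun i _ => by linarith [hw i]

theorem summable_of_sufficient_decrease {Φ d : ℕ → ℝ} {b c : ℝ} (hc : 0 < c)
    (hΦ : ∀ k, b ≤ Φ k) (hd : ∀ k, 0 ≤ d k) (hdec : ∀ k, Φ (k + 1) + c * d k ≤ Φ k) :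
    Summable d := by
  refine summable_of_sum_range_le hd (c := (Φ 0 - b) / c) fun N => ?_
  have htelescope : c * ∑ k ∈ range N, d k ≤ Φ 0 - Φ N := by
    rw [mul_sum, ← sum_range_sub']
    exact sum_le_sum fun k _ => by linarith [hdec k]
  rw [le_div_iff₀ hc]
  linarith [hΦ N]

theorem pira_successive_differences_tendsto_zero_general {m n : ℕ}
    (g : ℝ → ℝ)
    (hg_nonneg : ∀ t, 0 ≤ t → 0 ≤ g t)
    (f : Matrix (Fin m) (Fin n) ℝ → ℝ)
    (gradf : Matrix (Fin m) (Fin n) ℝ → Matrix (Fin m) (Fin n) ℝ)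
    (Lf : ℝ)
    (hdiff : ∀ X, HasFDerivAt f (frobInnerCLM (gradf X)) X)
    (hLip : ∀ X Y, frobNorm (gradf X - gradf Y) ≤ Lf * frobNorm (X - Y))
    (hf_nonneg : ∀ X, 0 ≤ f X)
    (F : Matrix (Fin m) (Fin n) ℝ → ℝ)
    (hF : ∀ X, F X = (∑ i, g (singularValues X i)) + f X)
    (μ : ℝ) (hμ : Lf < μ)
    (L : ℕ → Matrix (Fin m) (Fin n) ℝ)
    (hstep : ∀ k : ℕ, ∃ w : Fin (min m n) → ℝ,
      (∀ i, 0 ≤ w i) ∧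
      (∀ i, ∀ t : ℝ, 0 ≤ t →
        g t ≤ g (singularValues (L k) i) + w i * (t - singularValues (L k) i)) ∧
      (∀ X : Matrix (Fin m) (Fin n) ℝ,
        (∑ i, w i * singularValues (L (k + 1)) i)
            + frobInner (gradf (L k)) (L (k + 1) - L k)
            + (μ / 2) * frobNormSq (L (k + 1) - L k)
          ≤ (∑ i, w i * singularValues X i)
            + frobInner (gradf (L k)) (X - L k)
            + (μ / 2) * frobNormSq (X - L k))) :
    Filter.Tendsto (fun k : ℕ => frobNorm (L k - L (k + 1))) Filter.atTop (nhds 0) := by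
  have hF_nonneg : ∀ X, 0 ≤ F X := fun X => by
    rw [hF]
    exact add_nonneg (sum_nonneg fun i _ => hg_nonneg _ (singularValues_nonneg X i))
      (hf_nonneg X)
  have hf' : ∀ X Y V, frobInnerCLM (gradf X) V - frobInnerCLM (gradf Y) V
      ≤ Lf * ‖X - Y‖ * ‖V‖ := fun X Y V =>
    frobInner_sub_frobInner_le (by simpa only [frobNorm_eq_norm] using hLip X Y) V
  have hdecrease : ∀ k, F (L (k + 1)) + (μ - Lf) / 2 * ‖L k - L (k + 1)‖ ^ 2 ≤ F (L k) := by
    intro k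
    obtain ⟨w, -, hsup, hmin⟩ := hstep k
    rw [hF, hF, norm_sub_rev]
    refine prox_linear_step_sufficient_decrease (h := fun X => ∑ i, g (singularValues X i))
      (q := fun X => ∑ i, w i * singularValues X i) hdiff hf'
      (sum_sub_sum_le_of_supergradient fun i => hsup i _ (singularValues_nonneg _ i)) ?_
    change _ + frobInner (gradf (L k)) _ + _ ≤ _
    simpa [frobInner, frobNormSq_eq_norm_sq] using hmin (L k)
  have hsq := (summable_of_sufficient_decrease (by linarith) (fun k => hF_nonneg (L k))
    (fun k => sq_nonneg _) hdecrease).tendsto_atTop_zero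
  simpa [frobNorm_eq_norm] using hsq.sqrt

/-- Under the hypotheses giving summability of successive differences, the successive
differences of the proximal iteratively reweighted iterates converge to zero:
`‖L^k − L^{k+1}‖_F → 0` as `k → ∞`. -/
theorem pira_successive_differences_tendsto_zero {m n : ℕ} (hmn : m ≤ n)
    (g : ℝ → ℝ)
    (hg_nonneg : ∀ t, 0 ≤ t → 0 ≤ g t)
    (hg_cont : ContinuousOn g (Set.Ici 0))
    (hg_concave : ConcaveOn ℝ (Set.Ici 0) g)
    (hg_mono : MonotoneOn g (Set.Ici 0))
    (f : Matrix (Fin m) (Fin n) ℝ → ℝ)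
    (gradf : Matrix (Fin m) (Fin n) ℝ → Matrix (Fin m) (Fin n) ℝ)
    (Lf : ℝ)
    (hdiff : ∀ X, HasFDerivAt f (frobInnerCLM (gradf X)) X)
    (hLip : ∀ X Y, frobNorm (gradf X - gradf Y) ≤ Lf * frobNorm (X - Y))
    (hf_nonneg : ∀ X, 0 ≤ f X)
    (F : Matrix (Fin m) (Fin n) ℝ → ℝ)
    (hF : ∀ X, F X = (∑ i, g (singularValues X i)) + f X)
    (μ : ℝ) (hμ : Lf < μ)
    (L : ℕ → Matrix (Fin m) (Fin n) ℝ)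
    (hstep : ∀ k : ℕ, ∃ w : Fin (min m n) → ℝ,
      (∀ i, 0 ≤ w i) ∧
      (∀ i, ∀ t : ℝ, 0 ≤ t →
        g t ≤ g (singularValues (L k) i) + w i * (t - singularValues (L k) i)) ∧
      (∀ X : Matrix (Fin m) (Fin n) ℝ,
        (∑ i, w i * singularValues (L (k + 1)) i)
            + frobInner (gradf (L k)) (L (k + 1) - L k)
            + (μ / 2) * frobNormSq (L (k + 1) - L k)
          ≤ (∑ i, w i * singularValues X i)
            + frobInner (gradf (L k)) (X - L k)
            + (μ / 2) * frobNormSq (X - L k))) :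
    Filter.Tendsto (fun k : ℕ => frobNorm (L k - L (k + 1))) Filter.atTop (nhds 0) :=
  pira_successive_differences_tendsto_zero_general g hg_nonneg f gradf Lf hdiff hLip hf_nonneg F hF
    μ hμ L hstep
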